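/- In the proof of the symmetry of the positive ground state (moving planes, Step 1): let u ∈ H ∩ C²(ℝ^N) be a positive solution of −Δu + V(z)u = f(u) with u(z) → 0 as |z| → ∞. For λ ∈ ℝ set u_λ(z) = u(2λ−x₁, x₂,…,x_m, y) and w_λ = u_λ − u on Σ_λ = {z : x₁ < λ}. Then there exists R₁ > 0 such that for every λ ≤ −R₁ one has w_λ > 0 in Σ_λ and ∂w_λ/∂x₁ < 0 on the hyperplane {x₁ = λ}. -/

import Mathlib

noncomputable section

open MeasureTheory Filter Real Set RealInnerProductSpace
open Topology
set_option linter.unusedSectionVars false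
set_option maxHeartbeats 2000000

abbrev Pt (N : ℕ) := EuclideanSpace ℝ (Fin N)

/-- The partial confinement potential `V(z) = x₁² + ⋯ + x_m²`. -/
def Vpot (N m : ℕ) (z : Pt N) : ℝ := ∑ i : Fin N, if (i : ℕ) < m then (z i) ^ 2 else 0

/-- `F(s) = ∫₀^s f(t) dt`. -/
def Fprim (f : ℝ → ℝ) (s : ℝ) : ℝ := ∫ t in (0:ℝ)..s, f t

/-- Hypotheses (f1)-(f4) on the nonlinearity. -/
structure NLHyp (N : ℕ) (f : ℝ → ℝ) (γ : ℝ) : Prop where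
  contDiff : ContDiff ℝ 1 f
  f1 : Tendsto (fun s => f s / |s|) (nhdsWithin 0 {(0:ℝ)}ᶜ) (nhds 0)
  f2 : Tendsto (fun s => f s / |s| ^ (2 * (N:ℝ) / ((N:ℝ) - 2) - 1)) (cocompact ℝ) (nhds 0)
  hγ : 2 < γ
  f3 : ∀ s : ℝ, s ≠ 0 → 0 < γ * Fprim f s ∧ γ * Fprim f s ≤ f s * s
  f4neg : StrictMonoOn (fun s => f s / |s|) (Iio (0:ℝ))
  f4pos : StrictMonoOn (fun s => f s / |s|) (Ioi (0:ℝ))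

/-- Membership in the energy space `H`. -/
def MemH (N m : ℕ) (u : Pt N → ℝ) : Prop :=
  AEStronglyMeasurable u volume ∧ Integrable (fun z => (u z) ^ 2) volume ∧
    Integrable (fun z => ‖gradient u z‖ ^ 2) volume ∧
    Integrable (fun z => Vpot N m z * (u z) ^ 2) volume

/-- The squared norm `‖u‖² = ∫ (|∇u|² + V(z) u²)`. -/
def normHsq (N m : ℕ) (u : Pt N → ℝ) : ℝ :=
  ∫ z, (‖gradient u z‖ ^ 2 + Vpot N m z * (u z) ^ 2)

/-- The energy functional `I`. -/
def energy (N m : ℕ) (f : ℝ → ℝ) (u : Pt N → ℝ) : ℝ :=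
  (1 / 2) * normHsq N m u - ∫ z, Fprim f (u z)

/-- The Nehari manifold `𝒩`. -/
def InNehari (N m : ℕ) (f : ℝ → ℝ) (u : Pt N → ℝ) : Prop :=
  MemH N m u ∧ ¬ (u =ᵐ[volume] (0 : Pt N → ℝ)) ∧
    normHsq N m u = ∫ z, f (u z) * u z

/-- The ground state level `c = inf_𝒩 I`. -/
def groundLevel (N m : ℕ) (f : ℝ → ℝ) : ℝ :=
  sInf (energy N m f '' {u | InNehari N m f u})

/-- Weak solution of `-Δu + V u = f(u)`. -/
def IsWeakSolution (N m : ℕ) (f : ℝ → ℝ) (u : Pt N → ℝ) : Prop :=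
  ∀ φ : Pt N → ℝ, ContDiff ℝ (⊤ : ℕ∞) φ → HasCompactSupport φ →
    (∫ z, (⟪gradient u z, gradient φ z⟫ + Vpot N m z * u z * φ z)) = ∫ z, f (u z) * φ z

/-- The Laplacian. -/
def lap (N : ℕ) (u : Pt N → ℝ) (z : Pt N) : ℝ :=
  ∑ i : Fin N, iteratedFDeriv ℝ 2 u z ![EuclideanSpace.single i 1, EuclideanSpace.single i 1]

def yNormSq (N m : ℕ) (z : Pt N) : ℝ := ∑ i : Fin N, if m ≤ (i : ℕ) then (z i) ^ 2 else 0

/-- The reflection `z ↦ z^λ = (2λ - x₁, x₂, …, x_m, y)` about the hyperplane `{x₁ = λ}`. -/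
def reflHyp (N : ℕ) (lam : ℝ) (z : Pt N) : Pt N :=
  (WithLp.equiv 2 (Fin N → ℝ)).symm fun i => if (i : ℕ) = 0 then 2 * lam - z i else z i

/-- The first coordinate `x₁` of a point. -/
def coord0 (N : ℕ) (z : Pt N) : ℝ := ∑ j : Fin N, if (j : ℕ) = 0 then z j else 0

/-- The first coordinate direction `e₁`. -/
def e0 (N : ℕ) : Pt N :=
  (WithLp.equiv 2 (Fin N → ℝ)).symm fun i => if (i : ℕ) = 0 then 1 else 0

/-- 1D: at a local min, second derivative is nonneg. -/
lemma sd_nonneg_of_isLocalMin {φ φ' : ℝ → ℝ} {d : ℝ}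
    (hφ : ∀ t, HasDerivAt φ (φ' t) t) (hφ' : HasDerivAt φ' d 0)
    (hmin : IsLocalMin φ 0) : 0 ≤ d := by
  by_contra h
  push_neg at h
  have h0 : φ' 0 = 0 := hmin.hasDerivAt_eq_zero (hφ 0)
  have hs : Tendsto (slope φ' 0) (𝓝[≠] (0:ℝ)) (𝓝 d) :=
    hasDerivAt_iff_tendsto_slope.1 hφ'
  have hs' : Tendsto (slope φ' 0) (𝓝[<] (0:ℝ)) (𝓝 d) :=
    hs.mono_left (nhdsWithin_mono _ (fun t ht => ne_of_lt ht))
  have hev1 : ∀ᶠ t in 𝓝[<] (0:ℝ), slope φ' 0 t < 0 :=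
    hs'.eventually (Filter.Tendsto.eventually_lt_const h tendsto_id)
  have hev2 : ∀ᶠ t in 𝓝[<] (0:ℝ), φ 0 ≤ φ t :=
    eventually_nhdsWithin_of_eventually_nhds hmin
  obtain ⟨a, ha, hsub⟩ := mem_nhdsLT_iff_exists_Ioo_subset.1 (hev1.and hev2)
  have key : ∀ t ∈ Ioo a (0:ℝ), 0 < φ' t ∧ φ 0 ≤ φ t := by
    intro t ht
    obtain ⟨h1, h2⟩ := hsub ht
    refine ⟨?_, h2⟩
    have hsl : slope φ' 0 t = φ' t / t := by
      simp [slope_def_field, h0]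
    rw [hsl] at h1
    rcases div_neg_iff.1 h1 with ⟨hp, _⟩ | ⟨_, hp⟩
    · exact hp
    · exact absurd ht.2 (not_lt.2 hp.le)
  -- φ is strictly monotone on [a/2, 0]
  set b : ℝ := a / 2 with hb
  have hab : a < b := by
    have : a < 0 := ha
    linarith
  have hb0 : b < 0 := by
    have : a < 0 := ha
    linarith
  have hmono : StrictMonoOn φ (Icc b 0) := by
    refine strictMonoOn_of_deriv_pos (convex_Icc _ _) ?_ ?_
    · exact fun t _ => (hφ t).continuousAt.continuousWithinAt
    · intro t ht
      rw [interior_Icc] at ht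
      rw [(hφ t).deriv]
      exact (key t ⟨lt_trans hab ht.1, ht.2⟩).1
  have h1 : φ b < φ 0 := hmono ⟨le_refl b, hb0.le⟩ ⟨hb0.le, le_refl 0⟩ hb0
  have h2 : φ 0 ≤ φ b := (key b ⟨hab, hb0⟩).2
  linarith

/-- Derivatives along a line, for a C² function. -/
lemma line_hasDerivAt {N : ℕ} {g : Pt N → ℝ} (hg : ContDiff ℝ 2 g) (z v : Pt N) (t : ℝ) :
    HasDerivAt (fun s : ℝ => g (z + s • v)) (fderiv ℝ g (z + t • v) v) t := by
  have hline : HasDerivAt (fun s : ℝ => z + s • v) v t := by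
    simpa using ((hasDerivAt_id t).smul_const v).const_add z
  have hd : DifferentiableAt ℝ g (z + t • v) :=
    (hg.differentiable (by norm_num)) _
  exact hd.hasFDerivAt.comp_hasDerivAt t hline

lemma line_hasDerivAt2 {N : ℕ} {g : Pt N → ℝ} (hg : ContDiff ℝ 2 g) (z v : Pt N) (t : ℝ) :
    HasDerivAt (fun s : ℝ => fderiv ℝ g (z + s • v) v)
      (fderiv ℝ (fderiv ℝ g) (z + t • v) v v) t := by
  have hline : HasDerivAt (fun s : ℝ => z + s • v) v t := by
    simpa using ((hasDerivAt_id t).smul_const v).const_add z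
  have hF : ContDiff ℝ 1 (fderiv ℝ g) := hg.fderiv_right (le_refl 2)
  have hd : DifferentiableAt ℝ (fderiv ℝ g) (z + t • v) := (hF.differentiable one_ne_zero) _
  have h1 : HasDerivAt (fun s : ℝ => fderiv ℝ g (z + s • v))
      (fderiv ℝ (fderiv ℝ g) (z + t • v) v) t := by
    exact hd.hasFDerivAt.comp_hasDerivAt t hline
  have h2 := (ContinuousLinearMap.apply ℝ ℝ v).hasFDerivAt.comp_hasDerivAt t h1
  exact h2

/-- Identify second directional derivative with a computed line second derivative. -/
lemma snd_eq_of_line {N : ℕ} {g : Pt N → ℝ} (hg : ContDiff ℝ 2 g) (z v : Pt N)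
    {G : ℝ → ℝ} {d : ℝ} (hG : ∀ t, HasDerivAt (fun s => g (z + s • v)) (G t) t)
    (hG' : HasDerivAt G d 0) : fderiv ℝ (fderiv ℝ g) z v v = d := by
  have hGe : (fun t => fderiv ℝ g (z + t • v) v) = G := by
    funext t
    exact (line_hasDerivAt hg z v t).unique (hG t)
  have h2 := line_hasDerivAt2 hg z v 0
  rw [hGe] at h2
  have := h2.unique hG'
  simpa using this

lemma snd_nonneg_of_isLocalMin {N : ℕ} {g : Pt N → ℝ} (hg : ContDiff ℝ 2 g) {z : Pt N}
    (hmin : IsLocalMin g z) (v : Pt N) : 0 ≤ fderiv ℝ (fderiv ℝ g) z v v := by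
  have hline : Continuous (fun s : ℝ => z + s • v) := by continuity
  have hmin' : IsLocalMin (fun s : ℝ => g (z + s • v)) 0 := by
    have ht : Tendsto (fun s : ℝ => z + s • v) (𝓝 0) (𝓝 z) := by
      have := hline.tendsto 0
      simpa using this
    have hev : ∀ᶠ s in 𝓝 (0:ℝ), g z ≤ g (z + s • v) := ht.eventually hmin
    simpa [IsLocalMin, IsMinFilter] using hev
  have h := sd_nonneg_of_isLocalMin (φ := fun s => g (z + s • v))
    (φ' := fun t => fderiv ℝ g (z + t • v) v)
    (fun t => line_hasDerivAt hg z v t) (by simpa using line_hasDerivAt2 hg z v 0) hmin'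
  simpa using h

lemma lap_eq {N : ℕ} (g : Pt N → ℝ) (z : Pt N) :
    lap N g z = ∑ i : Fin N,
      fderiv ℝ (fderiv ℝ g) z (EuclideanSpace.single i 1) (EuclideanSpace.single i 1) := by
  unfold lap
  refine Finset.sum_congr rfl fun i _ => ?_
  rw [iteratedFDeriv_two_apply]
  simp

lemma lap_nonneg_of_isLocalMin {N : ℕ} {g : Pt N → ℝ} (hg : ContDiff ℝ 2 g) {z : Pt N}
    (hmin : IsLocalMin g z) : 0 ≤ lap N g z := by
  rw [lap_eq]
  exact Finset.sum_nonneg fun i _ => snd_nonneg_of_isLocalMin hg hmin _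

section Refl
variable {N : ℕ} [NeZero N]

lemma refl_apply (lam : ℝ) (z : Pt N) (i : Fin N) :
    reflHyp N lam z i = if (i : ℕ) = 0 then 2 * lam - z i else z i := rfl

lemma e0_apply (i : Fin N) : e0 N i = if (i : ℕ) = 0 then 1 else 0 := rfl

lemma coord0_eq (z : Pt N) : coord0 N z = z 0 := by
  unfold coord0
  rw [Finset.sum_eq_single (0 : Fin N)]
  · simp
  · intro j _ hj
    rw [if_neg]
    exact fun h => hj (Fin.ext (by simp [h]))
  · simp

def flipCLM (N : ℕ) [NeZero N] : Pt N →L[ℝ] Pt N :=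
  ContinuousLinearMap.id ℝ (Pt N) -
    (2 : ℝ) • (EuclideanSpace.proj (0 : Fin N)).smulRight (EuclideanSpace.single (0 : Fin N) (1:ℝ))

lemma flip_apply (z : Pt N) (i : Fin N) :
    flipCLM N z i = if i = 0 then -z i else z i := by
  by_cases h : i = 0
  · subst h
    simp [flipCLM, EuclideanSpace.single_apply]
    ring
  · simp [flipCLM, EuclideanSpace.single_apply, h]

lemma refl_eq_affine (lam : ℝ) (z : Pt N) :
    reflHyp N lam z = flipCLM N z + (2 * lam) • e0 N := by
  ext i
  rw [refl_apply]
  have : (flipCLM N z + (2 * lam) • e0 N) i = flipCLM N z i + (2*lam) * e0 N i := rfl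
  rw [this, flip_apply, e0_apply]
  by_cases h : i = 0
  · simp [h, Fin.val_zero]; ring
  · have h' : (i : ℕ) ≠ 0 := fun h'' => h (Fin.ext (by simp [h'']))
    simp [h, h']

lemma refl_line (lam : ℝ) (z v : Pt N) (s : ℝ) :
    reflHyp N lam (z + s • v) = reflHyp N lam z + s • flipCLM N v := by
  rw [refl_eq_affine, refl_eq_affine, (flipCLM N).map_add, (flipCLM N).map_smul]
  module

lemma refl_refl (lam : ℝ) (z : Pt N) : reflHyp N lam (reflHyp N lam z) = z := by
  ext i
  rw [refl_apply, refl_apply]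
  by_cases h : (i : ℕ) = 0 <;> simp [h]

lemma coord0_refl (lam : ℝ) (z : Pt N) : coord0 N (reflHyp N lam z) = 2 * lam - coord0 N z := by
  rw [coord0_eq, coord0_eq, refl_apply]
  simp

lemma continuous_refl (lam : ℝ) : Continuous (reflHyp N lam) := by
  have : (reflHyp N lam) = fun z => flipCLM N z + (2 * lam) • e0 N := funext (refl_eq_affine lam)
  rw [this]
  exact (flipCLM N).continuous.add continuous_const

lemma contDiff_refl_comp {u : Pt N → ℝ} (hu : ContDiff ℝ 2 u) (lam : ℝ) :
    ContDiff ℝ 2 (fun z => u (reflHyp N lam z)) := by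
  have : (fun z => u (reflHyp N lam z)) = fun z => u (flipCLM N z + (2 * lam) • e0 N) := by
    funext z; rw [refl_eq_affine]
  rw [this]
  exact hu.comp ((flipCLM N).contDiff.add contDiff_const)

lemma tendsto_refl_cocompact (lam : ℝ) :
    Tendsto (reflHyp N lam) (cocompact (Pt N)) (cocompact (Pt N)) :=
  (Homeomorph.mk ⟨reflHyp N lam, reflHyp N lam, refl_refl lam, refl_refl lam⟩
    (continuous_refl lam) (continuous_refl lam)).map_cocompact.le
end Refl

section V
variable {N : ℕ} [NeZero N]

lemma normsq_eq (z : Pt N) : ‖z‖ ^ 2 = ∑ i, (z i) ^ 2 := by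
  rw [EuclideanSpace.norm_eq, Real.sq_sqrt]
  · refine Finset.sum_congr rfl fun i _ => ?_
    rw [Real.norm_eq_abs, sq_abs]
  · exact Finset.sum_nonneg fun i _ => sq_nonneg _

lemma abs_coord_le_norm (z : Pt N) (i : Fin N) : |z i| ≤ ‖z‖ := by
  have h1 : (z i) ^ 2 ≤ ‖z‖ ^ 2 := by
    rw [normsq_eq]
    exact Finset.single_le_sum (fun j _ => sq_nonneg (z j)) (Finset.mem_univ i)
  calc |z i| = Real.sqrt ((z i) ^ 2) := (Real.sqrt_sq_eq_abs _).symm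
    _ ≤ Real.sqrt (‖z‖ ^ 2) := Real.sqrt_le_sqrt h1
    _ = ‖z‖ := by rw [Real.sqrt_sq (norm_nonneg _)]

lemma Vpot_nonneg (m : ℕ) (z : Pt N) : 0 ≤ Vpot N m z :=
  Finset.sum_nonneg fun i _ => by positivity

lemma coord0_sq_le_Vpot {m : ℕ} (hm : 1 ≤ m) (z : Pt N) : (z 0) ^ 2 ≤ Vpot N m z := by
  unfold Vpot
  have h0 : ((0 : Fin N) : ℕ) < m := by
    simp; omega
  have := Finset.single_le_sum (f := fun i : Fin N => if (i : ℕ) < m then (z i) ^ 2 else 0)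
    (fun j _ => by positivity) (Finset.mem_univ (0 : Fin N))
  have hm' : 0 < m := hm
  simpa [hm'] using this

lemma Vpot_le_normsq (m : ℕ) (z : Pt N) : Vpot N m z ≤ ‖z‖ ^ 2 := by
  rw [normsq_eq]
  refine Finset.sum_le_sum fun i _ => ?_
  by_cases h : (i : ℕ) < m <;> simp [h] <;> positivity

lemma Vpot_refl {m : ℕ} (hm : 1 ≤ m) (lam : ℝ) (z : Pt N) :
    Vpot N m (reflHyp N lam z) = Vpot N m z + 4 * lam * (lam - z 0) := by
  have key : Vpot N m (reflHyp N lam z) - Vpot N m z = 4 * lam * (lam - z 0) := by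
    unfold Vpot
    rw [← Finset.sum_sub_distrib]
    rw [Finset.sum_eq_single (0 : Fin N)]
    · have h0 : ((0 : Fin N) : ℕ) = 0 := rfl
      have hlt : ((0 : Fin N) : ℕ) < m := by simp; omega
      rw [refl_apply]
      have hm' : 0 < m := hm
      simp only [h0, if_true, hm', if_pos]
      ring
    · intro j _ hj
      have hj' : (j : ℕ) ≠ 0 := fun h => hj (Fin.ext (by simp [h]))
      rw [refl_apply]
      simp [hj']
    · simp
  linarith
end V

section T
variable {N : ℕ} [NeZero N]

lemma snd_neg (g : Pt N → ℝ) (w v : Pt N) :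
    fderiv ℝ (fderiv ℝ g) w (-v) (-v) = fderiv ℝ (fderiv ℝ g) w v v := by
  rw [map_neg, map_neg, ContinuousLinearMap.neg_apply, neg_neg]

lemma flip_single (i : Fin N) :
    flipCLM N (EuclideanSpace.single i (1:ℝ)) =
      (if i = 0 then -(EuclideanSpace.single i (1:ℝ)) else EuclideanSpace.single i (1:ℝ)) := by
  by_cases h : i = 0
  · subst h
    simp only [if_pos]
    ext j
    rw [flip_apply]
    by_cases hj : j = 0
    · subst hj; simp
    · simp [hj, EuclideanSpace.single_apply, Ne.symm hj]
  · simp only [h, if_neg, if_false]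
    ext j
    rw [flip_apply]
    by_cases hj : j = 0
    · subst hj
      simp [EuclideanSpace.single_apply, Ne.symm h]
    · simp only [flip_apply, if_neg hj]

lemma snd_comp_refl {u : Pt N → ℝ} (hu : ContDiff ℝ 2 u) (lam : ℝ) (z v : Pt N) :
    fderiv ℝ (fderiv ℝ (fun x => u (reflHyp N lam x))) z v v =
      fderiv ℝ (fderiv ℝ u) (reflHyp N lam z) (flipCLM N v) (flipCLM N v) := by
  refine snd_eq_of_line (contDiff_refl_comp hu lam) z v
    (G := fun t => fderiv ℝ u (reflHyp N lam z + t • flipCLM N v) (flipCLM N v)) ?_ ?_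
  · intro t
    have h := line_hasDerivAt hu (reflHyp N lam z) (flipCLM N v) t
    have he : (fun s : ℝ => u (reflHyp N lam z + s • flipCLM N v)) =
        (fun s : ℝ => u (reflHyp N lam (z + s • v))) := by
      funext s; rw [refl_line]
    rw [he] at h
    exact h
  · have h := line_hasDerivAt2 hu (reflHyp N lam z) (flipCLM N v) 0
    simpa using h

lemma lap_comp_refl {u : Pt N → ℝ} (hu : ContDiff ℝ 2 u) (lam : ℝ) (z : Pt N) :
    lap N (fun x => u (reflHyp N lam x)) z = lap N u (reflHyp N lam z) := by
  rw [lap_eq, lap_eq]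
  refine Finset.sum_congr rfl fun i _ => ?_
  rw [snd_comp_refl hu lam z, flip_single]
  by_cases h : i = 0
  · rw [if_pos h, snd_neg]
  · rw [if_neg h]

lemma lap_sub {g₁ g₂ : Pt N → ℝ} (h₁ : ContDiff ℝ 2 g₁) (h₂ : ContDiff ℝ 2 g₂) (z : Pt N) :
    lap N (fun x => g₁ x - g₂ x) z = lap N g₁ z - lap N g₂ z := by
  rw [lap_eq, lap_eq, lap_eq, ← Finset.sum_sub_distrib]
  refine Finset.sum_congr rfl fun i _ => ?_
  exact snd_eq_of_line (h₁.sub h₂) z _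
    (G := fun t => fderiv ℝ g₁ (z + t • EuclideanSpace.single i 1) (EuclideanSpace.single i 1)
      - fderiv ℝ g₂ (z + t • EuclideanSpace.single i 1) (EuclideanSpace.single i 1))
    (fun t => (line_hasDerivAt h₁ z _ t).sub (line_hasDerivAt h₂ z _ t))
    (by
      have h := (line_hasDerivAt2 h₁ z (EuclideanSpace.single i 1) 0).sub
        (line_hasDerivAt2 h₂ z (EuclideanSpace.single i 1) 0)
      simp only [zero_smul, add_zero] at h
      exact h)
end T

lemma exists_bound {N : ℕ} (u : Pt N → ℝ) (hc : Continuous u)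
    (hd : Tendsto u (cocompact (Pt N)) (𝓝 0)) : ∃ M : ℝ, 1 ≤ M ∧ ∀ z, u z ≤ M := by
  obtain ⟨C, hC, hsub⟩ := mem_cocompact.1 (hd (Iio_mem_nhds (by norm_num : (0:ℝ) < 1)))
  obtain ⟨M0, hM0⟩ := (hC.image hc).bddAbove
  refine ⟨max M0 1, le_max_right _ _, fun z => ?_⟩
  by_cases hz : z ∈ C
  · exact le_trans (hM0 (mem_image_of_mem u hz)) (le_max_left _ _)
  · exact le_trans (le_of_lt (hsub hz)) (le_max_right _ _)

lemma exists_lip (f : ℝ → ℝ) (hf : ContDiff ℝ 1 f) (M : ℝ) :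
    ∃ K : ℝ, 0 ≤ K ∧ ∀ a b, a ∈ Icc (0:ℝ) M → b ∈ Icc (0:ℝ) M → |f b - f a| ≤ K * |b - a| := by
  have hderiv : Continuous (deriv f) := hf.continuous_deriv le_rfl
  obtain ⟨K0, hK0⟩ := (isCompact_Icc.image (continuous_abs.comp hderiv)).bddAbove
  refine ⟨max K0 0, le_max_right _ _, ?_⟩
  have key : ∀ a b, a ∈ Icc (0:ℝ) M → b ∈ Icc (0:ℝ) M → a < b →
      |f b - f a| ≤ max K0 0 * |b - a| := by
    intro a b ha hb hab
    obtain ⟨c, hc, hceq⟩ := exists_hasDerivAt_eq_slope f (deriv f) hab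
      (hf.continuous.continuousOn)
      (fun x _ => ((hf.differentiable one_ne_zero) x).hasDerivAt)
    have hcmem : c ∈ Icc (0:ℝ) M := ⟨le_trans ha.1 hc.1.le, le_trans hc.2.le hb.2⟩
    have h1 : |deriv f c| ≤ K0 := hK0 (mem_image_of_mem _ hcmem)
    have h2 : f b - f a = deriv f c * (b - a) := by
      rw [hceq, div_mul_cancel₀ _ (sub_ne_zero.2 hab.ne')]
    rw [h2, abs_mul]
    exact mul_le_mul (le_trans h1 (le_max_left _ _)) le_rfl (abs_nonneg _)
      (le_max_right K0 0)
  intro a b ha hb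
  rcases lt_trichotomy a b with h | h | h
  · exact key a b ha hb h
  · simp [h]
  · have := key b a hb ha h
    rw [abs_sub_comm (f b) (f a), abs_sub_comm b a]
    exact this

lemma exists_min_on_closed {N : ℕ} {w : Pt N → ℝ} (hw : Continuous w)
    (h0 : Tendsto w (cocompact (Pt N)) (𝓝 0)) {S : Set (Pt N)} (hS : IsClosed S)
    {z₁ : Pt N} (hz₁ : z₁ ∈ S) (hneg : w z₁ < 0) :
    ∃ z₀ ∈ S, w z₀ < 0 ∧ ∀ z ∈ S, w z₀ ≤ w z := by
  obtain ⟨C, hC, hsub⟩ := mem_cocompact.1 (h0 (Ioi_mem_nhds hneg))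
  have hz₁C : z₁ ∈ C := by
    by_contra h
    have h2 : w z₁ ∈ Ioi (w z₁) := hsub h
    exact lt_irrefl _ (mem_Ioi.1 h2)
  have hSC : IsCompact (S ∩ C) := hC.inter_left hS
  obtain ⟨z₀, hz₀, hmin⟩ := hSC.exists_isMinOn ⟨z₁, hz₁, hz₁C⟩ hw.continuousOn
  have hmin' : ∀ z ∈ S ∩ C, w z₀ ≤ w z := fun z hz => hmin hz
  have hz₀neg : w z₀ < 0 := lt_of_le_of_lt (hmin' z₁ ⟨hz₁, hz₁C⟩) hneg
  refine ⟨z₀, hz₀.1, hz₀neg, fun z hz => ?_⟩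
  by_cases hzC : z ∈ C
  · exact hmin' z ⟨hz, hzC⟩
  · have h2 : w z ∈ Ioi (w z₁) := hsub hzC
    have h1 : w z₁ < w z := mem_Ioi.1 h2
    exact le_trans (hmin' z₁ ⟨hz₁, hz₁C⟩) h1.le

lemma poly_hasDerivAt (α q b t : ℝ) :
    HasDerivAt (fun s : ℝ => -α*(q + 2*b*s + s^2)) (-α*(2*b + 2*t)) t := by
  have h1 : HasDerivAt (fun s : ℝ => q + 2*b*s + s^2) (2*b + 2*t) t := by
    have ha := ((hasDerivAt_id t).const_mul (2*b)).const_add q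
    have hb := hasDerivAt_pow 2 t
    refine (ha.add hb).congr_deriv ?_
    push_cast
    ring
  have := h1.const_mul (-α)
  exact this

lemma barrier_d1 (ε α q b t : ℝ) :
    HasDerivAt (fun s : ℝ => ε * (Real.exp (-α*(q + 2*b*s + s^2)) - Real.exp (-α)))
      (ε * (Real.exp (-α*(q + 2*b*t + t^2)) * (-α*(2*b + 2*t)))) t :=
  (((poly_hasDerivAt α q b t).exp).sub_const _).const_mul ε

lemma barrier_d2 (ε α q b : ℝ) :
    HasDerivAt (fun t : ℝ => ε * (Real.exp (-α*(q + 2*b*t + t^2)) * (-α*(2*b + 2*t))))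
      (ε * (Real.exp (-α*q) * (4*α^2*b^2 - 2*α))) 0 := by
  have hexp := (poly_hasDerivAt α q b 0).exp
  have hlin : HasDerivAt (fun t : ℝ => -α*(2*b + 2*t)) (-α*2) 0 := by
    have := (((hasDerivAt_id (0:ℝ)).const_mul 2).const_add (2*b)).const_mul (-α)
    refine this.congr_deriv ?_
    ring
  have h := (hexp.mul hlin).const_mul ε
  have e : -α * (q + 2*b*(0:ℝ) + (0:ℝ)^2) = -α * q := by ring
  rw [e] at h
  refine h.congr_deriv ?_
  ring

lemma normsq_line {N : ℕ} [NeZero N] (x v : Pt N) (hv : ‖v‖ = 1) (t : ℝ) :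
    ‖x + t • v‖^2 = ‖x‖^2 + 2*(⟪x, v⟫)*t + t^2 := by
  rw [norm_add_sq_real, real_inner_smul_right, norm_smul]
  rw [Real.norm_eq_abs, hv]
  rw [mul_pow, sq_abs]
  ring

lemma contDiff_barrier {N : ℕ} (p : Pt N) (ε α : ℝ) :
    ContDiff ℝ 2 (fun x : Pt N => ε * (Real.exp (-α*‖x - p‖^2) - Real.exp (-α))) := by
  have h1 : ContDiff ℝ 2 (fun x : Pt N => ‖x - p‖^2) :=
    (contDiff_id.sub contDiff_const).norm_sq ℝ
  have h2 : ContDiff ℝ 2 (fun x : Pt N => -α*‖x - p‖^2) := contDiff_const.mul h1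
  exact contDiff_const.mul ((Real.contDiff_exp.comp h2).sub contDiff_const)

lemma snd_barrier {N : ℕ} [NeZero N] (p : Pt N) (ε α : ℝ) (z v : Pt N) (hv : ‖v‖ = 1) :
    fderiv ℝ (fderiv ℝ (fun x : Pt N => ε * (Real.exp (-α*‖x - p‖^2) - Real.exp (-α)))) z v v
      = ε * (Real.exp (-α*‖z - p‖^2) * (4*α^2*(⟪z - p, v⟫:ℝ)^2 - 2*α)) := by
  refine snd_eq_of_line (contDiff_barrier p ε α) z v
    (G := fun t => ε * (Real.exp (-α*(‖z - p‖^2 + 2*(⟪z - p, v⟫:ℝ)*t + t^2)) *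
      (-α*(2*(⟪z - p, v⟫:ℝ) + 2*t)))) ?_ (barrier_d2 ε α _ _)
  intro t
  have h := barrier_d1 ε α (‖z - p‖^2) (⟪z - p, v⟫:ℝ) t
  have he : (fun s : ℝ => ε * (Real.exp (-α*(‖z - p‖^2 + 2*(⟪z - p, v⟫:ℝ)*s + s^2))
        - Real.exp (-α)))
      = (fun s : ℝ => ε * (Real.exp (-α*‖z + s•v - p‖^2) - Real.exp (-α))) := by
    funext s
    have hz : z + s•v - p = (z - p) + s•v := by abel
    rw [hz, normsq_line _ _ hv]
  rw [he] at h
  exact h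

lemma lap_barrier {N : ℕ} [NeZero N] (p : Pt N) (ε α : ℝ) (z : Pt N) :
    lap N (fun x : Pt N => ε * (Real.exp (-α*‖x - p‖^2) - Real.exp (-α))) z
      = ε * (Real.exp (-α*‖z - p‖^2) * (4*α^2*‖z - p‖^2 - 2*α*N)) := by
  rw [lap_eq]
  have step : ∑ i : Fin N, fderiv ℝ
        (fderiv ℝ (fun x : Pt N => ε * (Real.exp (-α*‖x - p‖^2) - Real.exp (-α)))) z
        (EuclideanSpace.single i 1) (EuclideanSpace.single i 1)
      = ∑ i : Fin N, ((ε * Real.exp (-α*‖z - p‖^2) * (4*α^2)) * ((z - p) i)^2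
          - ε * Real.exp (-α*‖z - p‖^2) * (2*α)) := by
    refine Finset.sum_congr rfl fun i _ => ?_
    rw [snd_barrier p ε α z _ (by simp)]
    have hi : (⟪z - p, EuclideanSpace.single i (1:ℝ)⟫:ℝ) = (z - p) i := by
      rw [EuclideanSpace.inner_single_right]
      simp
    rw [hi]
    ring
  rw [step, Finset.sum_sub_distrib, ← Finset.mul_sum, ← normsq_eq (z - p), Finset.sum_const,
    Finset.card_univ, Fintype.card_fin]
  simp only [nsmul_eq_mul]
  ring

lemma e0_eq {N : ℕ} [NeZero N] : e0 N = EuclideanSpace.single (0 : Fin N) (1:ℝ) := by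
  ext i
  rw [e0_apply, EuclideanSpace.single_apply]
  by_cases h : i = 0
  · subst h; simp
  · have h' : (i : ℕ) ≠ 0 := fun h'' => h (Fin.ext (by simp [h'']))
    simp [h, h']

lemma norm_e0 {N : ℕ} [NeZero N] : ‖e0 N‖ = 1 := by
  rw [e0_eq]
  simp

/-- moving planes, Step 1: for a positive solution `u ∈ H ∩ C²(ℝ^N)`
with `u(z) → 0` at infinity, there is `R₁ > 0` such that for all `λ ≤ -R₁` one has
`w_λ = u∘(reflection) - u > 0` on `Σ_λ = {x₁ < λ}` and `∂w_λ/∂x₁ < 0` on `{x₁ = λ}`. -/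
theorem statement19 (N m : ℕ) (hN : 2 ≤ N) (hm : 1 ≤ m) (hmN : m < N)
    (f : ℝ → ℝ) (γ : ℝ) (hf : NLHyp N f γ)
    (u : Pt N → ℝ) (hu : MemH N m u) (huC2 : ContDiff ℝ 2 u)
    (hpos : ∀ z : Pt N, 0 < u z)
    (hsol : ∀ z : Pt N, -lap N u z + Vpot N m z * u z = f (u z))
    (hdecay : Tendsto u (cocompact (Pt N)) (nhds 0)) :
    ∃ R₁ : ℝ, 0 < R₁ ∧ ∀ lam : ℝ, lam ≤ -R₁ →
      (∀ z : Pt N, coord0 N z < lam → u z < u (reflHyp N lam z)) ∧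
      (∀ z : Pt N, coord0 N z = lam →
        fderiv ℝ (fun w => u (reflHyp N lam w) - u w) z (e0 N) < 0) := by
  haveI : NeZero N := ⟨by omega⟩
  obtain ⟨M, hM1, hMu⟩ := exists_bound u huC2.continuous hdecay
  obtain ⟨K, hK0, hKlip⟩ := exists_lip f hf.contDiff M
  refine ⟨K + 1, by linarith, fun lam hlam => ?_⟩
  set w : Pt N → ℝ := fun z => u (reflHyp N lam z) - u z with hwdef
  have hlam0 : lam < 0 := lt_of_le_of_lt hlam (by linarith)
  have hRsq : K + 1 ≤ lam^2 := by nlinarith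
  have hreflC2 : ContDiff ℝ 2 (fun z => u (reflHyp N lam z)) := contDiff_refl_comp huC2 lam
  have hwC2 : ContDiff ℝ 2 w := hreflC2.sub huC2
  have hrefl_fix : ∀ z : Pt N, z 0 = lam → reflHyp N lam z = z := by
    intro z hz
    ext i
    rw [refl_apply]
    by_cases h : (i : ℕ) = 0
    · have hi : i = 0 := by
        apply Fin.ext
        simpa using h
      rw [if_pos h, hi, hz]
      ring
    · rw [if_neg h]
  have hw0 : ∀ z : Pt N, z 0 = lam → w z = 0 := by
    intro z hz
    simp only [hwdef, hrefl_fix z hz, sub_self]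
  have hwten : Tendsto w (cocompact (Pt N)) (𝓝 0) := by
    have := (hdecay.comp (tendsto_refl_cocompact lam)).sub hdecay
    simpa using this
  have lapu : ∀ x, lap N u x = Vpot N m x * u x - f (u x) := by
    intro x
    have := hsol x
    linarith
  have lapw : ∀ z : Pt N, lap N w z = Vpot N m z * w z
      + 4*lam*(lam - z 0) * u (reflHyp N lam z)
      + (f (u z) - f (u (reflHyp N lam z))) := by
    intro z
    have h1 : lap N w z = lap N (fun x => u (reflHyp N lam x)) z - lap N u z :=
      lap_sub hreflC2 huC2 z
    rw [h1, lap_comp_refl huC2, lapu, lapu, Vpot_refl hm]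
    simp only [hwdef]
    ring
  have hopen : IsOpen {z : Pt N | z 0 < lam} := by
    have : Continuous (fun z : Pt N => z 0) := (EuclideanSpace.proj (0 : Fin N)).continuous
    exact isOpen_lt this continuous_const
  -- Claim A : w ≥ 0 on the closed half-space
  have claimA : ∀ z : Pt N, z 0 ≤ lam → 0 ≤ w z := by
    by_contra hA
    push_neg at hA
    obtain ⟨z₁, hz₁lam, hz₁w⟩ := hA
    have hSclosed : IsClosed {z : Pt N | z 0 ≤ lam} := by
      have : Continuous (fun z : Pt N => z 0) := (EuclideanSpace.proj (0 : Fin N)).continuous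
      exact isClosed_le this continuous_const
    obtain ⟨z₀, hz₀S, hz₀neg, hz₀min⟩ :=
      exists_min_on_closed hwC2.continuous hwten hSclosed hz₁lam hz₁w
    have hz₀le : z₀ 0 ≤ lam := hz₀S
    have hz₀lt : z₀ 0 < lam := by
      rcases lt_or_eq_of_le hz₀le with h | h
      · exact h
      · rw [hw0 z₀ h] at hz₀neg; linarith
    have hlocmin : IsLocalMin w z₀ := by
      have hmem : {z : Pt N | z 0 < lam} ∈ 𝓝 z₀ := hopen.mem_nhds hz₀lt
      exact Filter.eventually_of_mem hmem (fun z hz => hz₀min z (le_of_lt (mem_setOf.1 hz)))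
    have hlap : 0 ≤ lap N w z₀ := lap_nonneg_of_isLocalMin hwC2 hlocmin
    set a := u (reflHyp N lam z₀) with ha
    set b := u z₀ with hb
    have hW : w z₀ = a - b := rfl
    have hab : a < b := by rw [hW] at hz₀neg; linarith
    have hfa : |f b - f a| ≤ K * |b - a| :=
      hKlip a b ⟨(hpos _).le, hMu _⟩ ⟨(hpos _).le, hMu _⟩
    have habs1 : |f b - f a| = |f b - f a| := rfl
    have hD : f b - f a ≤ K * (b - a) := by
      have h1 : |b - a| = b - a := abs_of_pos (by linarith)
      calc f b - f a ≤ |f b - f a| := le_abs_self _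
        _ ≤ K * |b - a| := hfa
        _ = K * (b - a) := by rw [h1]
    have hV : K + 1 ≤ Vpot N m z₀ := by
      have h1 : lam^2 ≤ (z₀ 0)^2 := by nlinarith
      have h2 := coord0_sq_le_Vpot hm z₀
      linarith
    have hT : 4*lam*(lam - z₀ 0) * a < 0 := by
      have hapos : 0 < a := hpos _
      have hd : 0 < lam - z₀ 0 := by linarith
      have h4l : 4 * lam < 0 := by linarith
      nlinarith [mul_neg_of_neg_of_pos h4l (mul_pos hd hapos)]
    have h6 : Vpot N m z₀ * w z₀ ≤ (K+1) * w z₀ := by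
      have hWneg : w z₀ ≤ 0 := hz₀neg.le
      exact mul_le_mul_of_nonpos_right hV hWneg
    have h7 : K * (b - a) = -(K * w z₀) := by rw [hW]; ring
    have h8 : (K+1) * w z₀ = K * w z₀ + w z₀ := by ring
    have := lapw z₀
    rw [hW] at hz₀neg
    linarith [lapw z₀]
  -- Claim B : w > 0 on the open half-space
  have claimB : ∀ z : Pt N, z 0 < lam → 0 < w z := by
    intro z hz
    rcases lt_or_eq_of_le (claimA z hz.le) with h | h
    · exact h
    · exfalso
      have hww : w z = 0 := h.symm
      have hlocmin : IsLocalMin w z := by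
        have hmem : {x : Pt N | x 0 < lam} ∈ 𝓝 z := hopen.mem_nhds hz
        refine Filter.eventually_of_mem hmem (fun x hx => ?_)
        rw [hww]
        exact claimA x (le_of_lt hx)
      have hlap : 0 ≤ lap N w z := lap_nonneg_of_isLocalMin hwC2 hlocmin
      have hueq : u (reflHyp N lam z) = u z := by
        have : u (reflHyp N lam z) - u z = 0 := hww
        linarith
      have := lapw z
      rw [hww, hueq] at this
      have hT : 4*lam*(lam - z 0) * u z < 0 := by
        have hupos : 0 < u z := hpos z
        have hd : 0 < lam - z 0 := by linarith
        have h4l : 4 * lam < 0 := by linarith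
        nlinarith [mul_neg_of_neg_of_pos h4l (mul_pos hd hupos)]
      rw [this] at hlap
      simp only [mul_zero, sub_self, add_zero, zero_add] at hlap
      linarith
  -- conclusions
  constructor
  · intro z hz
    rw [coord0_eq] at hz
    have := claimB z hz
    simp only [hwdef] at this
    linarith
  · intro z hz
    rw [coord0_eq] at hz
    -- Hopf-type boundary lemma via a barrier
    set p : Pt N := z - e0 N with hpdef
    have hz_p : z - p = e0 N := sub_sub_cancel z (e0 N)
    have hp0 : p 0 = lam - 1 := by
      have h1 : p 0 = z 0 - e0 N 0 := rfl
      rw [h1, hz, e0_apply]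
      norm_num
    have hcoordle : ∀ x : Pt N, ‖x - p‖ ≤ 1 → x 0 ≤ lam := by
      intro x hx
      have h1 := abs_coord_le_norm (x - p) 0
      have h2 : (x - p) 0 = x 0 - p 0 := rfl
      rw [h2, hp0] at h1
      have := abs_le.1 (le_trans h1 hx)
      linarith [this.2]
    have hcoordlt : ∀ x : Pt N, ‖x - p‖ < 1 → x 0 < lam := by
      intro x hx
      have h1 := abs_coord_le_norm (x - p) 0
      have h2 : (x - p) 0 = x 0 - p 0 := rfl
      rw [h2, hp0] at h1
      have := abs_le.1 h1
      linarith [this.2]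
    set Cb : ℝ := (‖p‖ + 1)^2 with hCb
    have hCb1 : 1 ≤ Cb := by
      have := norm_nonneg p
      nlinarith
    set α : ℝ := 2*(N:ℝ) + Cb + K + 1 with hα
    have hN4 : (4:ℝ) ≤ 2*(N:ℝ) := by
      have : (2:ℝ) ≤ (N:ℝ) := by exact_mod_cast hN
      linarith
    have hα1 : 1 ≤ α := by rw [hα]; linarith
    have hα2N : 2*(N:ℝ) ≤ α := by rw [hα]; linarith
    -- minimum of w on the inner sphere
    have hsph_pt : (p + (1/2 : ℝ) • e0 N) ∈ Metric.sphere p (1/2 : ℝ) := by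
      have : p + (1/2 : ℝ) • e0 N - p = (1/2 : ℝ) • e0 N := add_sub_cancel_left p _
      simp [Metric.mem_sphere, dist_eq_norm, this, norm_smul, norm_e0]
    obtain ⟨zs, hzs, hzsmin⟩ := (isCompact_sphere p (1/2 : ℝ)).exists_isMinOn ⟨_, hsph_pt⟩
      hwC2.continuous.continuousOn
    have hsph_lt : ∀ x ∈ Metric.sphere p (1/2 : ℝ), x 0 < lam := by
      intro x hx
      refine hcoordlt x ?_
      have : dist x p = 1/2 := hx
      rw [dist_eq_norm] at this
      rw [this]; norm_num
    set ε : ℝ := w zs with hε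
    have hε_pos : 0 < ε := claimB zs (hsph_lt zs hzs)
    have hεw : ∀ x ∈ Metric.sphere p (1/2 : ℝ), ε ≤ w x := fun x hx => hzsmin hx
    -- the barrier
    set ψ : Pt N → ℝ := fun x => ε * (Real.exp (-α*‖x - p‖^2) - Real.exp (-α)) with hψ
    have hψC2 : ContDiff ℝ 2 ψ := contDiff_barrier p ε α
    set A : Set (Pt N) := {x | 1/2 ≤ ‖x - p‖ ∧ ‖x - p‖ ≤ 1} with hA
    have hnormcont : Continuous (fun x : Pt N => ‖x - p‖) :=
      (continuous_id.sub continuous_const).norm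
    have hAcomp : IsCompact A := by
      have hclosed : IsClosed A := by
        rw [hA]
        exact (isClosed_le continuous_const hnormcont).inter
          (isClosed_le hnormcont continuous_const)
      have hsubball : A ⊆ Metric.closedBall p 1 := by
        intro x hx
        rw [Metric.mem_closedBall, dist_eq_norm]
        exact hx.2
      exact (isCompact_closedBall p 1).of_isClosed_subset hclosed hsubball
    -- comparison on the annulus
    have hcomp : ∀ x ∈ A, ψ x ≤ w x := by
      by_contra hc
      push_neg at hc
      obtain ⟨x₁, hx₁A, hx₁⟩ := hc
      obtain ⟨z₂, hz₂A, hz₂min⟩ := hAcomp.exists_isMinOn ⟨x₁, hx₁A⟩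
        (hwC2.continuous.sub hψC2.continuous).continuousOn
      have hz₂min' : ∀ x ∈ A, w z₂ - ψ z₂ ≤ w x - ψ x := fun x hx => hz₂min hx
      have hφneg : w z₂ - ψ z₂ < 0 := lt_of_le_of_lt (hz₂min' x₁ hx₁A) (by linarith)
      have hexpa : 0 < Real.exp (-α) := Real.exp_pos _
      have hr1 : ‖z₂ - p‖ < 1 := by
        rcases lt_or_eq_of_le hz₂A.2 with h | h
        · exact h
        · exfalso
          have hψ0 : ψ z₂ = 0 := by
            simp only [hψ]
            rw [h]
            norm_num
          have h0 : 0 ≤ w z₂ := claimA z₂ (hcoordle z₂ h.le)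
          linarith
      have hr2 : 1/2 < ‖z₂ - p‖ := by
        rcases lt_or_eq_of_le hz₂A.1 with h | h
        · exact h
        · exfalso
          have hsph : z₂ ∈ Metric.sphere p (1/2 : ℝ) := by
            rw [Metric.mem_sphere, dist_eq_norm, ← h]
          have h1 : ε ≤ w z₂ := hεw z₂ hsph
          have h2 : ψ z₂ ≤ ε := by
            simp only [hψ]
            have he1 : Real.exp (-α*‖z₂ - p‖^2) ≤ 1 := by
              rw [Real.exp_le_one_iff]
              have := sq_nonneg ‖z₂ - p‖
              nlinarith
            nlinarith
          linarith
      have hopenA : IsOpen {x : Pt N | 1/2 < ‖x - p‖ ∧ ‖x - p‖ < 1} :=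
        (isOpen_lt continuous_const hnormcont).inter (isOpen_lt hnormcont continuous_const)
      have hlocmin : IsLocalMin (fun x => w x - ψ x) z₂ := by
        have hmem : {x : Pt N | 1/2 < ‖x - p‖ ∧ ‖x - p‖ < 1} ∈ 𝓝 z₂ :=
          hopenA.mem_nhds ⟨hr2, hr1⟩
        refine Filter.eventually_of_mem hmem (fun x hx => ?_)
        exact hz₂min' x ⟨(mem_setOf.1 hx).1.le, (mem_setOf.1 hx).2.le⟩
      have hlapφ : 0 ≤ lap N (fun x => w x - ψ x) z₂ :=
        lap_nonneg_of_isLocalMin (hwC2.sub hψC2) hlocmin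
      have hlapsub : lap N (fun x => w x - ψ x) z₂ = lap N w z₂ - lap N ψ z₂ :=
        lap_sub hwC2 hψC2 z₂
      set q : ℝ := ‖z₂ - p‖^2 with hq
      have hq14 : 1/4 ≤ q := by rw [hq]; nlinarith [norm_nonneg (z₂ - p)]
      have hq1 : q ≤ 1 := by rw [hq]; nlinarith [norm_nonneg (z₂ - p)]
      have hlapψ : lap N ψ z₂ = ε * (Real.exp (-α*q) * (4*α^2*q - 2*α*(N:ℝ))) := by
        rw [hψ, hq]
        exact lap_barrier p ε α z₂
      have hE : 0 < Real.exp (-α*q) := Real.exp_pos _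
      have hz₂0 : z₂ 0 < lam := hcoordlt z₂ hr1
      have hVlow : K + 1 ≤ Vpot N m z₂ := by
        have h1 : lam^2 ≤ (z₂ 0)^2 := by nlinarith
        have h2 := coord0_sq_le_Vpot hm z₂
        linarith
      have hVhigh : Vpot N m z₂ ≤ Cb := by
        have h1 : ‖z₂‖ ≤ ‖p‖ + 1 := by
          calc ‖z₂‖ = ‖p + (z₂ - p)‖ := by rw [add_sub_cancel]
            _ ≤ ‖p‖ + ‖z₂ - p‖ := norm_add_le _ _
            _ ≤ ‖p‖ + 1 := by linarith
        have h2 := Vpot_le_normsq m z₂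
        have h3 : ‖z₂‖^2 ≤ (‖p‖+1)^2 := by nlinarith [norm_nonneg z₂]
        rw [hCb]; linarith
      have hWab : w z₂ = u (reflHyp N lam z₂) - u z₂ := rfl
      have habs : |f (u z₂) - f (u (reflHyp N lam z₂))| ≤ K * |u z₂ - u (reflHyp N lam z₂)| :=
        hKlip _ _ ⟨(hpos _).le, hMu _⟩ ⟨(hpos _).le, hMu _⟩
      have hT : 4*lam*(lam - z₂ 0) * u (reflHyp N lam z₂) ≤ 0 := by
        have hapos : 0 < u (reflHyp N lam z₂) := hpos _
        have hd : 0 < lam - z₂ 0 := by linarith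
        have h4l : 4 * lam < 0 := by linarith
        nlinarith [mul_neg_of_neg_of_pos h4l (mul_pos hd hapos)]
      have hlapw := lapw z₂
      have hfacpos : Cb + K + 1 ≤ 4*α^2*q - 2*α*(N:ℝ) := by
        have h1 : α^2 ≤ 4*α^2*q := by nlinarith [sq_nonneg α]
        have h2 : α*(Cb+K+1) = α^2 - 2*α*(N:ℝ) := by rw [hα]; ring
        have h3 : Cb+K+1 ≤ α*(Cb+K+1) := by
          nlinarith [mul_nonneg (by linarith : (0:ℝ) ≤ α - 1) (by linarith : (0:ℝ) ≤ Cb + K + 1)]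
        linarith
      rcases le_or_gt 0 (w z₂) with hWpos | hWneg
      · -- 0 ≤ w z₂ < ψ z₂
        have hWψ : w z₂ < ψ z₂ := by linarith
        have hD : f (u z₂) - f (u (reflHyp N lam z₂)) ≤ K * w z₂ := by
          have h1 : |u z₂ - u (reflHyp N lam z₂)| = w z₂ := by
            rw [hWab, abs_sub_comm]
            exact abs_of_nonneg hWpos
          calc f (u z₂) - f (u (reflHyp N lam z₂)) ≤ |f (u z₂) - f (u (reflHyp N lam z₂))| :=
              le_abs_self _
            _ ≤ K * |u z₂ - u (reflHyp N lam z₂)| := habs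
            _ = K * w z₂ := by rw [h1]
        have hVW : Vpot N m z₂ * w z₂ ≤ Cb * w z₂ := mul_le_mul_of_nonneg_right hVhigh hWpos
        have hlapw_le : lap N w z₂ ≤ (Cb + K) * w z₂ := by
          have hexpand : (Cb + K) * w z₂ = Cb * w z₂ + K * w z₂ := by ring
          linarith
        have hψle : ψ z₂ ≤ ε * Real.exp (-α*q) := by
          simp only [hψ, ← hq]
          nlinarith
        have hstep1 : (Cb+K) * ψ z₂ ≤ (Cb+K) * (ε * Real.exp (-α*q)) :=
          mul_le_mul_of_nonneg_left hψle (by linarith)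
        have hstep2 : (Cb+K) * (ε * Real.exp (-α*q))
            ≤ (4*α^2*q - 2*α*(N:ℝ)) * (ε * Real.exp (-α*q)) :=
          mul_le_mul_of_nonneg_right (by linarith) (mul_nonneg hε_pos.le hE.le)
        have hre : ε * (Real.exp (-α*q) * (4*α^2*q - 2*α*(N:ℝ)))
            = (4*α^2*q - 2*α*(N:ℝ)) * (ε * Real.exp (-α*q)) := by ring
        have hstrict : (Cb+K) * w z₂ < (Cb+K) * ψ z₂ :=
          mul_lt_mul_of_pos_left hWψ (by linarith)
        have : lap N w z₂ < lap N ψ z₂ := by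
          rw [hlapψ, hre]
          linarith
        linarith
      · -- w z₂ < 0
        have hD : f (u z₂) - f (u (reflHyp N lam z₂)) ≤ -(K * w z₂) := by
          have h1 : |u z₂ - u (reflHyp N lam z₂)| = -(w z₂) := by
            rw [hWab, abs_sub_comm]
            rw [abs_of_neg (by linarith : u (reflHyp N lam z₂) - u z₂ < 0)]
          calc f (u z₂) - f (u (reflHyp N lam z₂)) ≤ |f (u z₂) - f (u (reflHyp N lam z₂))| :=
              le_abs_self _
            _ ≤ K * |u z₂ - u (reflHyp N lam z₂)| := habs
            _ = -(K * w z₂) := by rw [h1]; ring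
        have hVW : Vpot N m z₂ * w z₂ ≤ (K+1) * w z₂ :=
          mul_le_mul_of_nonpos_right hVlow hWneg.le
        have hexpand : (K+1) * w z₂ = K * w z₂ + w z₂ := by ring
        have hlapw_neg : lap N w z₂ < 0 := by linarith
        have hlapψ_nonneg : 0 ≤ lap N ψ z₂ := by
          rw [hlapψ]
          have hfac : 0 ≤ 4*α^2*q - 2*α*(N:ℝ) := by linarith
          exact mul_nonneg hε_pos.le (mul_nonneg hE.le hfac)
        linarith
    -- now the one-dimensional slope argument at z
    have hline1 : HasDerivAt (fun s : ℝ => w (z + s • (-(e0 N)))) (fderiv ℝ w z (-(e0 N))) 0 := by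
      have := line_hasDerivAt hwC2 z (-(e0 N)) 0
      simpa using this
    have hbar : HasDerivAt (fun t : ℝ => ε * (Real.exp (-α*(1-t)^2) - Real.exp (-α)))
        (ε * (2*α*Real.exp (-α))) 0 := by
      have h1 : HasDerivAt (fun t : ℝ => (1:ℝ) - t) (-1) 0 := (hasDerivAt_id (0:ℝ)).const_sub 1
      have h2 := (h1.pow 2).const_mul (-α)
      have h3 := ((h2.exp).sub_const (Real.exp (-α))).const_mul ε
      refine h3.congr_deriv ?_
      have e1 : -α*((1:ℝ)-0)^2 = -α := by norm_num
      simp only [Pi.pow_apply]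
      rw [e1]
      norm_num
      left
      ring
    have hd := hline1.sub hbar
    have hφt0 : w (z + (0:ℝ) • (-(e0 N))) - ε * (Real.exp (-α*(1-(0:ℝ))^2) - Real.exp (-α)) = 0 := by
      have hz0 : z + (0:ℝ) • (-(e0 N)) = z := by simp
      rw [hz0, hw0 z hz]
      norm_num
    have hφtnonneg : ∀ t ∈ Ioo (0:ℝ) (1/2 : ℝ),
        0 ≤ w (z + t • (-(e0 N))) - ε * (Real.exp (-α*(1-t)^2) - Real.exp (-α)) := by
      intro t ht
      have hxnorm : z + t • (-(e0 N)) - p = (1-t) • e0 N := by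
        have step1 : z + t • (-(e0 N)) - p = (z - p) - t • e0 N := by module
        rw [step1, hz_p]
        module
      have hn1 : ‖z + t • (-(e0 N)) - p‖ = 1 - t := by
        rw [hxnorm, norm_smul, norm_e0, mul_one, Real.norm_eq_abs, abs_of_pos (by linarith [ht.2] : (0:ℝ) < 1 - t)]
      have hxA : (z + t • (-(e0 N))) ∈ A := by
        rw [hA]
        constructor
        · rw [hn1]; linarith [ht.2]
        · rw [hn1]; linarith [ht.1]
      have hcomp' := hcomp _ hxA
      simp only [hψ] at hcomp'
      have hn2 : ‖z + t • (-(e0 N)) - p‖^2 = (1-t)^2 := by rw [hn1]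
      rw [hn2] at hcomp'
      linarith
    have hD0 : 0 ≤ fderiv ℝ w z (-(e0 N)) - ε * (2*α*Real.exp (-α)) := by
      by_contra hDneg
      push_neg at hDneg
      have hs : Tendsto (slope (fun t : ℝ => w (z + t • (-(e0 N)))
          - ε * (Real.exp (-α*(1-t)^2) - Real.exp (-α))) 0) (𝓝[>] (0:ℝ))
          (𝓝 (fderiv ℝ w z (-(e0 N)) - ε * (2*α*Real.exp (-α)))) :=
        (hasDerivAt_iff_tendsto_slope.1 hd).mono_left
          (nhdsWithin_mono _ (fun t ht => ne_of_gt ht))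
      have hev : ∀ᶠ t in 𝓝[>] (0:ℝ), slope (fun t : ℝ => w (z + t • (-(e0 N)))
          - ε * (Real.exp (-α*(1-t)^2) - Real.exp (-α))) 0 t < 0 :=
        hs.eventually (Filter.Tendsto.eventually_lt_const hDneg tendsto_id)
      have hIoo : Ioo (0:ℝ) (1/2 : ℝ) ∈ 𝓝[>] (0:ℝ) :=
        Ioo_mem_nhdsGT_of_mem ⟨le_refl (0:ℝ), by norm_num⟩
      have hev2 : ∀ᶠ t in 𝓝[>] (0:ℝ), t ∈ Ioo (0:ℝ) (1/2 : ℝ) :=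
        Filter.eventually_of_mem hIoo (fun x hx => hx)
      obtain ⟨t, hts, htmem⟩ := (hev.and hev2).exists
      have h1 : slope (fun t : ℝ => w (z + t • (-(e0 N)))
          - ε * (Real.exp (-α*(1-t)^2) - Real.exp (-α))) 0 t
          = (w (z + t • (-(e0 N))) - ε * (Real.exp (-α*(1-t)^2) - Real.exp (-α))) / t := by
        rw [slope_def_field, hφt0]
        field_simp
        simp only [sub_zero]
      rw [h1] at hts
      have h2 := hφtnonneg t htmem
      have h3 : (0:ℝ) < t := htmem.1
      have h4 : 0 ≤ (w (z + t • (-(e0 N))) - ε * (Real.exp (-α*(1-t)^2) - Real.exp (-α))) / t :=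
        div_nonneg h2 h3.le
      linarith
    have hfneg : fderiv ℝ w z (-(e0 N)) = -(fderiv ℝ w z (e0 N)) := map_neg _ _
    have hexp_pos : 0 < ε * (2*α*Real.exp (-α)) := by
      have := Real.exp_pos (-α)
      have hαpos : 0 < α := by linarith
      positivity
    rw [hfneg] at hD0
    have hfinal : fderiv ℝ w z (e0 N) < 0 := by linarith
    exact hfinal

end
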